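/- Meyers' Theorem 4: Let a < b and let f : ℝ → ℝ be differentiable at every point of the closed interval [a, b] with derivative f' continuous on [a, b]. If f'(a) * (f(b) - f(a) - (b - a) * f'(b)) > 0, then there exists ξ ∈ (a, b) such that f'(ξ) = (f(ξ) - f(a)) / (b - a). -/

import Mathlib

open Set

theorem ContinuousOn.exists_mem_Ioo_eq_zero_of_mul_neg {α R : Type*}
    [ConditionallyCompleteLinearOrder α] [TopologicalSpace α] [OrderTopology α]
    [DenselyOrdered α] [Ring R] [LinearOrder R] [IsStrictOrderedRing R] [TopologicalSpace R]
    [OrderClosedTopology R] {a b : α} {g : α → R} (hab : a ≤ b) (hg : ContinuousOn g (Icc a b))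
    (hsign : g a * g b < 0) : ∃ c ∈ Ioo a b, g c = 0 := by
  rcases mul_neg_iff.1 hsign with ⟨ha, hb⟩ | ⟨ha, hb⟩
  · exact intermediate_value_Ioo' hab hg ⟨hb, ha⟩
  · exact intermediate_value_Ioo hab hg ⟨ha, hb⟩

/-- Meyers' Theorem 4. -/
theorem meyers_theorem_4 (f f' : ℝ → ℝ) (a b : ℝ) (hab : a < b)
    (hf : ∀ x ∈ Set.Icc a b, HasDerivWithinAt f (f' x) (Set.Icc a b) x)
    (hf' : ContinuousOn f' (Set.Icc a b))
    (hcond : f' a * (f b - f a - (b - a) * f' b) > 0) :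
    ∃ ξ ∈ Set.Ioo a b, f' ξ = (f ξ - f a) / (b - a) := by
  -- `φ` vanishes exactly at the points we are looking for, and `hcond` says `φ` changes sign.
  set φ : ℝ → ℝ := fun x => f' x * (b - a) - (f x - f a)
  have hφ : ContinuousOn φ (Icc a b) :=
    (hf'.mul continuousOn_const).sub ((HasDerivWithinAt.continuousOn hf).sub continuousOn_const)
  have hsign : φ a * φ b < 0 := by
    have : φ a * φ b = -((b - a) * (f' a * (f b - f a - (b - a) * f' b))) := by
      simp only [φ]; ring
    rw [this, neg_lt_zero]
    exact mul_pos (sub_pos.2 hab) hcond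
  obtain ⟨ξ, hξ, hφξ⟩ := hφ.exists_mem_Ioo_eq_zero_of_mul_neg hab.le hsign
  refine ⟨ξ, hξ, ?_⟩
  rw [eq_div_iff (sub_ne_zero.2 hab.ne')]
  exact sub_eq_zero.1 hφξ
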